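/- Let G be a finite group, V a finite-dimensional complex vector space, ρ a representation of G on V (a monoid homomorphism G →* (V →ₗ[ℂ] V) landing in invertible maps, or Mathlib's Representation ℂ G V), f : G → ℂ, n ≥ 2 an integer, and γ : ZMod n → G a group homomorphism. Then, as linear endomorphisms of V, ∑_{x ∈ G} (∑_{t ∈ ZMod n} f(x * γ(t))) • ρ(x) = (∑_{y ∈ G} f(y) • ρ(y)) ∘ (∑_{t ∈ ZMod n} ρ(γ(t))). (The Fourier transform of the Radon transform of f equals the Fourier transform of f multiplied by I(ρ, γ) = ∑_t ρ(γ(t)).) -/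
import Mathlib


theorem fourier_of_radon {G : Type*} [Group G] [Fintype G]
    {V : Type*} [AddCommGroup V] [Module ℂ V] [FiniteDimensional ℂ V]
    (ρ : Representation ℂ G V) (f : G → ℂ)
    (n : ℕ) (hn : 2 ≤ n) (γ : Multiplicative (ZMod n) →* G) :
    haveI : NeZero n := ⟨by omega⟩
    (∑ x : G, (∑ t : ZMod n, f (x * γ (Multiplicative.ofAdd t))) • ρ x) =
      (∑ y : G, f y • ρ y) ∘ₗ (∑ t : ZMod n, ρ (γ (Multiplicative.ofAdd t))) := by
  haveI : NeZero n := ⟨by omega⟩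
  rw [← Module.End.mul_eq_comp, Finset.sum_mul]
  simp only [Finset.mul_sum, smul_mul_assoc, ← map_mul, Finset.sum_smul, ← Finset.sum_product']
  refine Fintype.sum_equiv
    (Equiv.mk (fun p : G × ZMod n => (p.1 * γ (Multiplicative.ofAdd p.2), -p.2))
      (fun p : G × ZMod n => (p.1 * γ (Multiplicative.ofAdd p.2), -p.2))
      (by intro p; simp [mul_assoc, ← map_mul, ← ofAdd_add])
      (by intro p; simp [mul_assoc, ← map_mul, ← ofAdd_add])) _ _ ?_
  intro ⟨x, t⟩
  simp only [Equiv.coe_fn_mk]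
  rw [mul_assoc, ← map_mul, ← ofAdd_add]
  simp
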